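/- Let R be a commutative semiring, X a set, and U an ultrafilter on X. Then integration against U is R-linear on finite-image functions: for all finite-image functions f, g : X → R and all c ∈ R, ∫_X (f + g) dU = ∫_X f dU + ∫_X g dU and ∫_X (c • f) dU = c · ∫_X f dU (the pointwise sum f + g and scalar multiple c • f again having finite image). -/

import Mathlib

universe u v

/-- The integral of a finite-image function `f : X → R` against an ultrafilter `U` on
`X`: the unique element `b : R` such that `f ⁻¹' {b} ∈ U`. -/
noncomputable def ufIntegral {X : Type u} {R : Type v} (U : Ultrafilter X) (f : X → R)
    (hf : (Set.range f).Finite) : R := by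
  have h : ∃ b, f ⁻¹' {b} ∈ U := by
    have hu : (⋃ b ∈ Set.range f, f ⁻¹' {b}) ∈ U := by
      have : (⋃ b ∈ Set.range f, f ⁻¹' {b}) = Set.univ := by
        ext x
        simp
      rw [this]
      exact Filter.univ_mem
    rcases (Ultrafilter.finite_biUnion_mem_iff hf).1 hu with ⟨b, _, hb⟩
    exact ⟨b, hb⟩
  exact h.choose

lemma ufIntegral_mem {X : Type u} {R : Type v} (U : Ultrafilter X) (f : X → R)
    (hf : (Set.range f).Finite) : f ⁻¹' {ufIntegral U f hf} ∈ U := by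
  unfold ufIntegral
  exact Exists.choose_spec (p := fun b => f ⁻¹' {b} ∈ U) _

lemma ufIntegral_eq {X : Type u} {R : Type v} (U : Ultrafilter X) (f : X → R)
    (hf : (Set.range f).Finite) {b : R} (hb : f ⁻¹' {b} ∈ U) :
    ufIntegral U f hf = b := by
  by_contra h
  have hmem := Filter.inter_mem (ufIntegral_mem U f hf) hb
  have hemp : f ⁻¹' {ufIntegral U f hf} ∩ f ⁻¹' {b} = ∅ := by
    ext x
    simp only [Set.mem_inter_iff, Set.mem_preimage, Set.mem_singleton_iff,
      Set.mem_empty_iff_false, iff_false]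
    rintro ⟨h1, h2⟩
    exact h (h1 ▸ h2.symm ▸ rfl)
  rw [hemp] at hmem
  exact U.empty_notMem hmem

/-- Integration against an ultrafilter is `R`-linear on finite-image functions: the
pointwise sum `f + g` and scalar multiple `c • f` again have finite image, and
`∫ (f + g) dU = ∫ f dU + ∫ g dU` and `∫ (c • f) dU = c * ∫ f dU`. -/
theorem stmt13 (R : Type u) [CommSemiring R] (X : Type v) (U : Ultrafilter X)
    (f g : X → R) (hf : (Set.range f).Finite) (hg : (Set.range g).Finite) (c : R) :
    ∃ (hfg : (Set.range (f + g)).Finite) (hcf : (Set.range (c • f)).Finite),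
      ufIntegral U (f + g) hfg = ufIntegral U f hf + ufIntegral U g hg ∧
      ufIntegral U (c • f) hcf = c * ufIntegral U f hf := by
  have hfg : (Set.range (f + g)).Finite := by
    apply ((hf.image2 (· + ·) hg)).subset
    rintro _ ⟨x, rfl⟩
    exact Set.mem_image2_of_mem (Set.mem_range_self x) (Set.mem_range_self x)
  have hcf : (Set.range (c • f)).Finite := by
    apply (hf.image (c * ·)).subset
    rintro _ ⟨x, rfl⟩
    exact ⟨f x, Set.mem_range_self x, rfl⟩
  refine ⟨hfg, hcf, ?_, ?_⟩
  · apply ufIntegral_eq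
    have := Filter.inter_mem (ufIntegral_mem U f hf) (ufIntegral_mem U g hg)
    apply Filter.mem_of_superset this
    rintro x ⟨h1, h2⟩
    simp only [Set.mem_preimage, Set.mem_singleton_iff] at *
    simp [h1, h2]
  · apply ufIntegral_eq
    apply Filter.mem_of_superset (ufIntegral_mem U f hf)
    intro x h1
    simp only [Set.mem_preimage, Set.mem_singleton_iff] at *
    simp [h1]
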